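/- Let α ∈ (0,∞)^d with min_j α_j > 1/2, f ∈ H^α_mix(𝕋^d) with Fourier coefficients c = (f̂_n)_{n ∈ ℤ^d}, h(α) = min_j α_j, and p(α) the number of j with α_j = h(α). Then for all s ≥ 2, the ℓ^2 best s-term approximation error satisfies σ_s(c)_2 ≲_{α,d} s^{−h(α)} (log s)^{h(α)(p(α)−1)} ‖f‖_{H^α_mix}. -/

import Mathlib

/-!
Normalise the exponents to `β j = α j / h`, so that `min β = 1` and the Sobolev weight of `n`
is `w(n)^(2h)` with `w(n) = ∏ j, (1 + |n j|)^(β j)`. Keeping the coefficients on the hyperbolic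
cross `{n | w(n) ≤ R}` leaves a tail of `ℓ²`-norm at most `R^(-h) ‖f‖`, because off the cross the
weight exceeds `R^(2h)`. The cross has `O(R (1 + log R)^(p-1))` points: once the coordinates
other than one `a` with `β a = 1` are fixed (a point `m` with `m a = 0`), at most `2R / w(m)`
values of `n a` remain, and the sum of `1 / w(m)` over a box factorises into one-dimensional
sums, which are `O(log R)` for the `p - 1` other coordinates with `β j = 1` and `O(1)` for the
rest. Taking `R ≍ s / (log s)^(p-1)` makes the cross have at most `s` points.
-/

open Real Finset

lemma sum_Icc_natAbs_le (g : ℕ → ℝ) (hg : ∀ i, 0 ≤ g i) (N : ℕ) :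
    ∑ k ∈ Icc (-(N : ℤ)) N, g k.natAbs ≤ 2 * ∑ i ∈ range (N + 1), g i := by
  have hmaps : ∀ k ∈ Icc (-(N : ℤ)) N, k.natAbs ∈ range (N + 1) := fun k hk => by
    rw [mem_Icc] at hk; rw [mem_range]; omega
  rw [← sum_fiberwise_of_maps_to hmaps, mul_sum]
  refine sum_le_sum fun i _ => ?_
  have hfiber : {k ∈ Icc (-(N : ℤ)) N | k.natAbs = i} ⊆ {(i : ℤ), -(i : ℤ)} := fun k hk => by
    rw [mem_filter] at hk; simp only [mem_insert, mem_singleton]; omega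
  have hcard : (#{k ∈ Icc (-(N : ℤ)) N | k.natAbs = i} : ℝ) ≤ 2 :=
    mod_cast (card_le_card hfiber).trans card_le_two
  rw [sum_congr rfl fun k hk => by rw [(mem_filter.1 hk).2], sum_const, nsmul_eq_mul]
  exact mul_le_mul_of_nonneg_right hcard (hg i)

lemma exists_sum_Icc_inv_rpow_le {b : ℝ} (hb : 1 ≤ b) :
    ∃ C, 0 ≤ C ∧ ∀ r : ℝ, 1 ≤ r →
      ∑ k ∈ Icc (-(⌈r⌉₊ : ℤ)) ⌈r⌉₊, ((1 + |(k : ℝ)|) ^ b)⁻¹ ≤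
        C * (1 + log r) ^ (if b = 1 then 1 else 0) := by
  have hsum (N : ℕ) : ∑ k ∈ Icc (-(N : ℤ)) N, ((1 + |(k : ℝ)|) ^ b)⁻¹ ≤
      2 * ∑ i ∈ range (N + 1), ((1 + (i : ℝ)) ^ b)⁻¹ := by
    simpa [Nat.cast_natAbs] using
      sum_Icc_natAbs_le (fun i => ((1 + (i : ℝ)) ^ b)⁻¹) (fun i => by positivity) N
  rcases hb.eq_or_lt with rfl | hb
  · refine ⟨6, by norm_num, fun r hr => ?_⟩
    have harmonic_le : ∑ i ∈ range (⌈r⌉₊ + 1), ((1 + (i : ℝ)) ^ (1 : ℝ))⁻¹ ≤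
        1 + log (⌈r⌉₊ + 1) := by
      simpa [harmonic, add_comm] using harmonic_le_one_add_log (⌈r⌉₊ + 1)
    have hlog : log (⌈r⌉₊ + 1) ≤ 2 + log r := by
      have h3 : log 3 ≤ 2 := by linarith [log_le_sub_one_of_pos (x := 3) (by norm_num)]
      have hceil : (⌈r⌉₊ : ℝ) + 1 ≤ 3 * r := by
        linarith [Nat.ceil_lt_add_one (by linarith : 0 ≤ r)]
      have := log_le_log (by positivity) hceil
      rw [log_mul (by norm_num) (by linarith)] at this
      linarith
    simp only [if_true, pow_one]
    linarith [hsum ⌈r⌉₊, log_nonneg hr]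
  · have hsummable : Summable fun i : ℕ => ((1 + (i : ℝ)) ^ b)⁻¹ := by
      refine ((summable_one_div_nat_add_rpow 1 b).2 hb).congr fun i => ?_
      rw [one_div, abs_of_nonneg (by positivity), add_comm]
    refine ⟨2 * ∑' i : ℕ, ((1 + (i : ℝ)) ^ b)⁻¹, by positivity, fun r _ => ?_⟩
    simp only [hb.ne', if_false, pow_zero, mul_one]
    exact (hsum _).trans (mul_le_mul_of_nonneg_left
      (hsummable.sum_le_tsum _ fun i _ => by positivity) zero_le_two)

lemma card_filter_one_add_abs_le (s : Finset ℤ) {t : ℝ} (ht : 0 ≤ t) :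
    (#(s.filter fun k : ℤ => 1 + |(k : ℝ)| ≤ t) : ℝ) ≤ 2 * t := by
  have hsub : (s.filter fun k : ℤ => 1 + |(k : ℝ)| ≤ t) ⊆ Ioo (-⌊t⌋) ⌊t⌋ := fun k hk => by
    have hk : |(k : ℝ)| < ⌊t⌋ := by linarith [(mem_filter.1 hk).2, Int.sub_one_lt_floor t]
    exact mem_Ioo.2 (abs_lt.1 (by exact_mod_cast hk))
  have hcard : ((#(Ioo (-⌊t⌋) ⌊t⌋) : ℤ) : ℝ) ≤ 2 * ⌊t⌋ := by
    rw [Int.card_Ioo, Int.toNat_eq_max]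
    exact_mod_cast max_le (by omega) (by positivity)
  calc (#(s.filter fun k : ℤ => 1 + |(k : ℝ)| ≤ t) : ℝ) ≤ #(Ioo (-⌊t⌋) ⌊t⌋) := by
        exact_mod_cast card_le_card hsub
    _ ≤ 2 * t := by push_cast at hcard; linarith [Int.floor_le t]

section HyperbolicCross

variable {ι : Type*} [Fintype ι]

noncomputable def mixedWeight (β : ι → ℝ) (n : ι → ℤ) : ℝ :=
  ∏ j, (1 + |(n j : ℝ)|) ^ β j

lemma one_le_one_add_abs_rpow {b : ℝ} (hb : 0 ≤ b) (k : ℤ) : 1 ≤ (1 + |(k : ℝ)|) ^ b :=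
  one_le_rpow (le_add_of_nonneg_right (abs_nonneg _)) hb

lemma one_le_mixedWeight {β : ι → ℝ} (hβ : ∀ j, 0 ≤ β j) (n : ι → ℤ) : 1 ≤ mixedWeight β n :=
  one_le_prod fun j _ => one_le_one_add_abs_rpow (hβ j) (n j)

lemma mixedWeight_pos (β : ι → ℝ) (n : ι → ℤ) : 0 < mixedWeight β n :=
  prod_pos fun _ _ => by positivity

lemma mixedWeight_rpow (β : ι → ℝ) (t : ℝ) (n : ι → ℤ) :
    mixedWeight β n ^ t = mixedWeight (fun j => t * β j) n := by
  rw [mixedWeight, ← finsetProd_rpow _ _ fun _ _ => by positivity]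
  refine prod_congr rfl fun j _ => ?_
  rw [← rpow_mul (by positivity), mul_comm]

lemma one_add_abs_le_mixedWeight {β : ι → ℝ} (hβ : ∀ j, 1 ≤ β j) (n : ι → ℤ) (j : ι) :
    1 + |(n j : ℝ)| ≤ mixedWeight β n := by
  classical
  have h1 : 1 ≤ 1 + |(n j : ℝ)| := le_add_of_nonneg_right (abs_nonneg _)
  calc 1 + |(n j : ℝ)| ≤ (1 + |(n j : ℝ)|) ^ β j := self_le_rpow_of_one_le h1 (hβ j)
    _ ≤ mixedWeight β n := by
      rw [mixedWeight, ← mul_prod_erase _ _ (mem_univ j)]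
      exact le_mul_of_one_le_right (by positivity)
        (one_le_prod fun i _ => one_le_one_add_abs_rpow (by linarith [hβ i]) (n i))

variable [DecidableEq ι]

lemma mixedWeight_eq_mul_update (β : ι → ℝ) (n : ι → ℤ) (a : ι) :
    mixedWeight β n = (1 + |(n a : ℝ)|) ^ β a * mixedWeight β (Function.update n a 0) := by
  rw [mixedWeight, mixedWeight, Fintype.prod_eq_mul_prod_compl a,
    Fintype.prod_eq_mul_prod_compl a]
  simp only [Function.update_self, Int.cast_zero, abs_zero, add_zero, one_rpow, one_mul]
  congr 1
  refine prod_congr rfl fun j hj => ?_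
  rw [Function.update_of_ne (by simpa using hj)]

/-- The box `|n j| ≤ ⌈r⌉₊` only serves to make this a `Finset`: when `β ≥ 1` it contains the
whole cross `{n | mixedWeight β n ≤ r}` (`mem_hyperbolicCross`). -/
noncomputable def hyperbolicCross (β : ι → ℝ) (r : ℝ) : Finset (ι → ℤ) :=
  {n ∈ Fintype.piFinset fun _ => Icc (-(⌈r⌉₊ : ℤ)) ⌈r⌉₊ | mixedWeight β n ≤ r}

lemma mem_hyperbolicCross {β : ι → ℝ} (hβ : ∀ j, 1 ≤ β j) {r : ℝ} {n : ι → ℤ} :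
    n ∈ hyperbolicCross β r ↔ mixedWeight β n ≤ r := by
  refine ⟨fun hn => (mem_filter.1 hn).2, fun hn => mem_filter.2 ⟨?_, hn⟩⟩
  refine Fintype.mem_piFinset.2 fun j => mem_Icc.2 (abs_le.1 ?_)
  have : ((|n j| : ℤ) : ℝ) ≤ ⌈r⌉₊ := by
    push_cast
    linarith [one_add_abs_le_mixedWeight hβ n j, Nat.le_ceil r]
  exact_mod_cast this

lemma hyperbolicCross_eq_empty {β : ι → ℝ} (hβ : ∀ j, 0 ≤ β j) {r : ℝ} (hr : r < 1) :
    hyperbolicCross β r = ∅ :=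
  filter_false_of_mem fun n _ => (hr.trans_le (one_le_mixedWeight hβ n)).not_ge

lemma card_hyperbolicCross_le_sum_image {β : ι → ℝ} {a : ι} (hβa : β a = 1) {r : ℝ}
    (hr : 0 ≤ r) :
    (#(hyperbolicCross β r) : ℝ) ≤
      2 * r * ∑ m ∈ (hyperbolicCross β r).image (Function.update · a 0), (mixedWeight β m)⁻¹ := by
  rw [card_eq_sum_card_image (Function.update · a 0), mul_sum]
  push_cast
  refine sum_le_sum fun m _ => ?_
  set fiber := {n ∈ hyperbolicCross β r | Function.update n a 0 = m}
  have hfiber : #fiber ≤ #((Icc (-(⌈r⌉₊ : ℤ)) ⌈r⌉₊).filter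
      fun k : ℤ => 1 + |(k : ℝ)| ≤ r / mixedWeight β m) := by
    refine card_le_card_of_injOn (· a) (fun n hn => ?_) (fun n hn n' hn' hnn' => ?_)
    · obtain ⟨hnH, rfl⟩ := mem_filter.1 (mem_coe.1 hn)
      rw [hyperbolicCross, mem_filter, Fintype.mem_piFinset] at hnH
      refine mem_filter.2 ⟨hnH.1 a, ?_⟩
      rw [le_div_iff₀ (mixedWeight_pos _ _)]
      simpa [mixedWeight_eq_mul_update β n a, hβa] using hnH.2
    · obtain ⟨-, hn⟩ := mem_filter.1 hn
      obtain ⟨-, hn'⟩ := mem_filter.1 hn'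
      funext j
      by_cases hj : j = a
      · subst hj; exact hnn'
      · simpa [Function.update_of_ne hj] using congrFun (hn.trans hn'.symm) j
  calc (#fiber : ℝ) ≤ 2 * (r / mixedWeight β m) := (Nat.cast_le.2 hfiber).trans
        (card_filter_one_add_abs_le _ (div_nonneg hr (mixedWeight_pos β m).le))
    _ = 2 * r * (mixedWeight β m)⁻¹ := by ring

lemma sum_image_update_inv_mixedWeight_le (β : ι → ℝ) (a : ι) (r : ℝ) :
    ∑ m ∈ (hyperbolicCross β r).image (Function.update · a 0), (mixedWeight β m)⁻¹ ≤
      ∏ j ∈ univ.erase a, ∑ k ∈ Icc (-(⌈r⌉₊ : ℤ)) ⌈r⌉₊, ((1 + |(k : ℝ)|) ^ β j)⁻¹ := by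
  set box : ι → Finset ℤ := Function.update (fun _ => Icc (-(⌈r⌉₊ : ℤ)) ⌈r⌉₊) a {0}
  have hsub : (hyperbolicCross β r).image (Function.update · a 0) ⊆ Fintype.piFinset box := by
    simp only [subset_iff, mem_image, Fintype.mem_piFinset]
    rintro _ ⟨n, hn, rfl⟩ j
    rw [hyperbolicCross, mem_filter, Fintype.mem_piFinset] at hn
    by_cases hj : j = a
    · subst hj; simp [box]
    · simpa [box, Function.update_of_ne hj] using hn.1 j
  calc _ ≤ ∑ m ∈ Fintype.piFinset box, (mixedWeight β m)⁻¹ :=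
        sum_le_sum_of_subset_of_nonneg hsub fun m _ _ => (inv_pos.2 (mixedWeight_pos β m)).le
    _ = ∏ j, ∑ k ∈ box j, ((1 + |(k : ℝ)|) ^ β j)⁻¹ := by
        simp only [prod_univ_sum, mixedWeight, prod_inv_distrib]
    _ = _ := by
        rw [← mul_prod_erase _ _ (mem_univ a)]
        simp only [box, Function.update_self, sum_singleton, Int.cast_zero, abs_zero, add_zero,
          one_rpow, inv_one, one_mul]
        exact prod_congr rfl fun j hj => by rw [Function.update_of_ne (ne_of_mem_erase hj)]

lemma exists_card_hyperbolicCross_le {β : ι → ℝ} (hβ : ∀ j, 1 ≤ β j) {a : ι} (hβa : β a = 1) :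
    ∃ K, 1 ≤ K ∧ ∀ r, 1 ≤ r →
      (#(hyperbolicCross β r) : ℝ) ≤ K * r * (1 + log r) ^ (#{j | β j = 1} - 1) := by
  choose C hC0 hC using fun j => exists_sum_Icc_inv_rpow_le (hβ j)
  refine ⟨max 1 (2 * ∏ j ∈ univ.erase a, C j), le_max_left _ _, fun r hr => ?_⟩
  have hexp : ∑ j ∈ univ.erase a, (if β j = 1 then 1 else 0) = #{j | β j = 1} - 1 := by
    rw [sum_boole, Nat.cast_id, filter_erase, card_erase_of_mem (by simp [hβa])]
  have hlog : 0 ≤ 1 + log r := by linarith [log_nonneg hr]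
  calc (#(hyperbolicCross β r) : ℝ)
      ≤ 2 * r * ∑ m ∈ (hyperbolicCross β r).image (Function.update · a 0), (mixedWeight β m)⁻¹ :=
        card_hyperbolicCross_le_sum_image hβa (by linarith)
    _ ≤ 2 * r * ∏ j ∈ univ.erase a, ∑ k ∈ Icc (-(⌈r⌉₊ : ℤ)) ⌈r⌉₊, ((1 + |(k : ℝ)|) ^ β j)⁻¹ := by
        gcongr; exact sum_image_update_inv_mixedWeight_le β a r
    _ ≤ 2 * r * ∏ j ∈ univ.erase a, C j * (1 + log r) ^ (if β j = 1 then 1 else 0) := by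
        gcongr with j; exact hC j r hr
    _ = (2 * ∏ j ∈ univ.erase a, C j) * r * (1 + log r) ^ (#{j | β j = 1} - 1) := by
        rw [prod_mul_distrib, prod_pow_eq_pow_sum, hexp]; ring
    _ ≤ _ := by gcongr; exact le_max_right _ _

lemma card_hyperbolicCross_div_le {β : ι → ℝ} (hβ : ∀ j, 1 ≤ β j) {K : ℝ} {q : ℕ} (hK1 : 1 ≤ K)
    (hK : ∀ r, 1 ≤ r → (#(hyperbolicCross β r) : ℝ) ≤ K * r * (1 + log r) ^ q)
    {s x : ℝ} (hs : 1 ≤ s) (hx : 1 + log s ≤ x) :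
    (#(hyperbolicCross β (s / (K * x ^ q))) : ℝ) ≤ s := by
  have hx1 : 1 ≤ x := by linarith [log_nonneg hs]
  have hKx : 1 ≤ K * x ^ q := one_le_mul_of_one_le_of_one_le hK1 (one_le_pow₀ hx1)
  set R := s / (K * x ^ q)
  rcases lt_or_ge R 1 with hR | hR
  · rw [hyperbolicCross_eq_empty (fun j => by linarith [hβ j]) hR, card_empty, Nat.cast_zero]
    linarith
  · have hlogR : 1 + log R ≤ x := by
      linarith [log_le_log (by linarith) (div_le_self (by linarith) hKx : R ≤ s)]
    calc (#(hyperbolicCross β R) : ℝ) ≤ K * R * (1 + log R) ^ q := hK R hR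
      _ ≤ K * R * x ^ q := by gcongr; linarith [log_nonneg hR]
      _ = s := by rw [mul_comm K, mul_assoc]; exact div_mul_cancel₀ s (by positivity)

lemma sq_rpow_le_mixedWeight {β : ι → ℝ} (hβ : ∀ j, 1 ≤ β j) {R t : ℝ} (hR : 0 ≤ R)
    (ht : 0 ≤ t) {n : ι → ℤ} (hn : n ∉ hyperbolicCross β R) :
    (R ^ t) ^ 2 ≤ mixedWeight (fun j => 2 * t * β j) n := by
  rw [← mixedWeight_rpow, mul_comm, rpow_mul (mixedWeight_pos β n).le, rpow_two]
  gcongr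
  exact (not_le.1 ((mem_hyperbolicCross hβ).not.1 hn)).le

end HyperbolicCross

lemma sqrt_tsum_compl_le_div {α : Type*} {f W : α → ℝ} {S : Set α} {t : ℝ} (ht : 0 < t)
    (hf : ∀ i, 0 ≤ f i) (hW : ∀ i, 0 ≤ W i) (hWS : ∀ i ∉ S, t ^ 2 ≤ W i)
    (hsum : Summable fun i => W i * f i) :
    √(∑' i : {i // i ∉ S}, f i) ≤ √(∑' i, W i * f i) / t := by
  have hle : ∀ i : {i // i ∉ S}, f i ≤ W i * f i / t ^ 2 := fun i => by
    rw [le_div_iff₀ (by positivity), mul_comm]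
    exact mul_le_mul_of_nonneg_right (hWS i i.2) (hf i)
  have hsumS : Summable fun i : {i // i ∉ S} => W i * f i / t ^ 2 := (hsum.subtype _).div_const _
  have htail : ∑' i : {i // i ∉ S}, f i ≤ (∑' i, W i * f i) / t ^ 2 :=
    calc ∑' i : {i // i ∉ S}, f i ≤ ∑' i : {i // i ∉ S}, W i * f i / t ^ 2 :=
          (Summable.of_nonneg_of_le (fun i : {i // i ∉ S} => hf i) hle hsumS).tsum_le_tsum hle hsumS
      _ = (∑' i : {i // i ∉ S}, W i * f i) / t ^ 2 := tsum_div_const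
      _ ≤ (∑' i, W i * f i) / t ^ 2 := by
          gcongr
          exact hsum.tsum_subtype_le _ {i | i ∉ S} fun i => mul_nonneg (hW i) (hf i)
  calc √(∑' i : {i // i ∉ S}, f i) ≤ √((∑' i, W i * f i) / t ^ 2) := sqrt_le_sqrt htail
    _ = √(∑' i, W i * f i) / t := by rw [sqrt_div' _ (by positivity), sqrt_sq ht.le]

lemma one_add_log_le_mul_log {s : ℝ} (hs : 2 ≤ s) : 1 + log s ≤ (1 + (log 2)⁻¹) * log s := by
  have h2 : 0 < log 2 := log_pos one_lt_two
  have := (one_le_div h2).2 (log_le_log two_pos hs)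
  rw [add_mul, one_mul, inv_mul_eq_div]
  linarith

lemma inv_rpow_div_mul_pow {s K B y : ℝ} (hs : 0 < s) (hK : 0 < K) (hB : 0 < B) (hy : 0 < y)
    (h : ℝ) (q : ℕ) :
    ((s / (K * (B * y) ^ q)) ^ h)⁻¹ = K ^ h * B ^ (h * q) * s ^ (-h) * y ^ (h * q) := by
  rw [← inv_rpow (by positivity), inv_div, div_rpow (by positivity) hs.le,
    mul_rpow hK.le (by positivity), ← rpow_natCast, ← rpow_mul (by positivity),
    mul_rpow hB.le hy.le, rpow_neg hs.le, mul_comm (q : ℝ) h]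
  ring

theorem stmt10_general (d : ℕ) (α : Fin d → ℝ) (hα : ∀ j, 1 / 2 < α j)
    (h : ℝ) (hle : ∀ j, h ≤ α j) (hmem : ∃ j, α j = h)
    (p : ℕ) (hp : p = (Finset.univ.filter (fun j => α j = h)).card) :
    ∃ C : ℝ, 0 < C ∧ ∀ c : (Fin d → ℤ) → ℂ,
      Summable (fun n => (∏ j, (1 + |(n j : ℝ)|) ^ (2 * α j)) * ‖c n‖ ^ 2) →
      ∀ s : ℕ, 2 ≤ s → ∃ S : Finset (Fin d → ℤ), S.card ≤ s ∧
        Real.sqrt (∑' n : {n : (Fin d → ℤ) // n ∉ S}, ‖c n.1‖ ^ 2) ≤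
          C * (s : ℝ) ^ (-h) * (Real.log s) ^ (h * ((p : ℝ) - 1)) *
            Real.sqrt (∑' n, (∏ j, (1 + |(n j : ℝ)|) ^ (2 * α j)) * ‖c n‖ ^ 2) := by
  obtain ⟨j₀, hj₀⟩ := hmem
  have h0 : 0 < h := by linarith [hα j₀]
  set β : Fin d → ℝ := fun j => α j / h
  have hβ : ∀ j, 1 ≤ β j := fun j => (one_le_div h0).2 (hle j)
  have hβp : #{j | β j = 1} = p := by simp only [β, div_eq_one_iff_eq h0.ne', hp]
  have hp1 : 1 ≤ p := hp ▸ card_pos.2 ⟨j₀, by simp [hj₀]⟩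
  obtain ⟨K, hK1, hK⟩ := exists_card_hyperbolicCross_le hβ (a := j₀) (by simp [β, hj₀, h0.ne'])
  rw [hβp] at hK
  set B := 1 + (log 2)⁻¹
  refine ⟨K ^ h * B ^ (h * ((p : ℝ) - 1)), by positivity, fun c hc s hs => ?_⟩
  have hs2 : (2 : ℝ) ≤ s := by exact_mod_cast hs
  have hlog : 0 < log s := log_pos (by linarith)
  set R := s / (K * (B * log s) ^ (p - 1))
  have hR : 0 < R := by positivity
  refine ⟨hyperbolicCross β R, ?_, ?_⟩
  · exact_mod_cast card_hyperbolicCross_div_le hβ hK1 hK (by linarith) (one_add_log_le_mul_log hs2)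
  have hWR (n : Fin d → ℤ) (hn : n ∉ hyperbolicCross β R) :
      (R ^ h) ^ 2 ≤ ∏ j, (1 + |(n j : ℝ)|) ^ (2 * α j) :=
    (sq_rpow_le_mixedWeight hβ hR.le h0.le hn).trans_eq
      (prod_congr rfl fun j _ => by dsimp only [β]; rw [mul_assoc, mul_div_cancel₀ _ h0.ne'])
  calc _ ≤ √(∑' n, (∏ j, (1 + |(n j : ℝ)|) ^ (2 * α j)) * ‖c n‖ ^ 2) / R ^ h :=
        sqrt_tsum_compl_le_div (rpow_pos_of_pos hR h) (fun _ => by positivity)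
          (fun _ => by positivity) hWR hc
    _ = _ := by
        rw [div_eq_inv_mul, inv_rpow_div_mul_pow (by linarith) (by linarith) (by positivity) hlog,
          Nat.cast_sub hp1, Nat.cast_one]

/-- Best `s`-term approximation rate in `H^α_mix`: for Fourier coefficient sequences `c`
with finite mixed Sobolev norm (weights `∏_j (1+|n_j|)^{2α_j}`), with `h = min_j α_j > 1/2`
and `p` the number of minimal coordinates, for every `s ≥ 2` there is a set `S` of at most
`s` indices whose complement has `ℓ²` tail
`≲_{α,d} s^{−h} (log s)^{h(p−1)} ‖f‖_{H^α_mix}`. -/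
theorem stmt10 (d : ℕ) (hd : 0 < d) (α : Fin d → ℝ) (hα : ∀ j, 1 / 2 < α j)
    (h : ℝ) (hle : ∀ j, h ≤ α j) (hmem : ∃ j, α j = h)
    (p : ℕ) (hp : p = (Finset.univ.filter (fun j => α j = h)).card) :
    ∃ C : ℝ, 0 < C ∧ ∀ c : (Fin d → ℤ) → ℂ,
      Summable (fun n => (∏ j, (1 + |(n j : ℝ)|) ^ (2 * α j)) * ‖c n‖ ^ 2) →
      ∀ s : ℕ, 2 ≤ s → ∃ S : Finset (Fin d → ℤ), S.card ≤ s ∧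
        Real.sqrt (∑' n : {n : (Fin d → ℤ) // n ∉ S}, ‖c n.1‖ ^ 2) ≤
          C * (s : ℝ) ^ (-h) * (Real.log s) ^ (h * ((p : ℝ) - 1)) *
            Real.sqrt (∑' n, (∏ j, (1 + |(n j : ℝ)|) ^ (2 * α j)) * ‖c n‖ ^ 2) :=
  stmt10_general d α hα h hle hmem p hp
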